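/- Let n be a natural number and let X, Y be n×n complex matrices. Then ‖X + Y‖₂ ≤ √((√2 + 1)/2) · ‖|X| + |Y|‖₂. -/

import Mathlib

open Matrix
open scoped ComplexOrder

/-- Hilbert–Schmidt (Frobenius) norm: ‖X‖₂ = √(Re Tr(XᴴX)). -/
noncomputable def hsNorm {n : ℕ} (X : Matrix (Fin n) (Fin n) ℂ) : ℝ :=
  Real.sqrt ((Matrix.trace (Xᴴ * X)).re)

/-- Angle Θ(X,Y) = arccos(Re Tr(YᴴX) / (‖X‖₂‖Y‖₂)). -/
noncomputable def theta {n : ℕ} (X Y : Matrix (Fin n) (Fin n) ℂ) : ℝ :=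
  Real.arccos ((Matrix.trace (Yᴴ * X)).re / (hsNorm X * hsNorm Y))

/-- |X| : the positive semidefinite square root of XᴴX. -/
noncomputable def matAbs {n : ℕ} (X : Matrix (Fin n) (Fin n) ℂ) : Matrix (Fin n) (Fin n) ℂ :=
  (Matrix.posSemidef_conjTranspose_mul_self X).1.eigenvectorUnitary.1 *
    diagonal ((↑) ∘ (√·) ∘ (Matrix.posSemidef_conjTranspose_mul_self X).1.eigenvalues) *
    (star (Matrix.posSemidef_conjTranspose_mul_self X).1.eigenvectorUnitary : Matrix (Fin n) (Fin n) ℂ)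

/-!
Write `X = U |X|` and `Y = V |Y|` with partial isometries `U`, `V`, and `|X| = R²`, `|Y| = S²`.
Expanding both squares, the claim reduces to `Re Tr(Y* X) ≤ √(‖X‖₂ ‖Y‖₂) ‖R S‖₂`, because
`‖|X|‖₂ = ‖X‖₂` and `Re Tr(|Y| |X|) = ‖R S‖₂²`. Since `Tr(Y* X) = Tr((S V* U R)(R S))`, this follows
from Cauchy–Schwarz once `‖S V* U R‖₂² = Re Tr((X U*)(Y V*)) ≤ ‖X‖₂ ‖Y‖₂`, where right
multiplication by `U*` or `V*` does not increase `‖·‖₂`. What remains is the scalar inequality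
`x² + y² + 2 √(xy) σ ≤ (√2 + 1)/2 · (x² + y² + 2σ²)`, a weighted AM–GM estimate.
-/

namespace Matrix

variable {m 𝕜 : Type*} [Fintype m] [DecidableEq m] [RCLike 𝕜]

lemma cfc_mul_cfc (A : Matrix m m 𝕜) (f g : ℝ → ℝ) :
    cfc f A * cfc g A = cfc (fun x => f x * g x) A :=
  (cfc_mul f g A (A.finite_real_spectrum.continuousOn f)
    (A.finite_real_spectrum.continuousOn g)).symm

lemma exists_isHermitian_mul_self_eq_cfc_sqrt (A : Matrix m m 𝕜) :
    ∃ R : Matrix m m 𝕜, R.IsHermitian ∧ R * R = cfc Real.sqrt A :=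
  ⟨cfc (fun x => √√x) A, cfc_predicate _ A, by
    simp only [cfc_mul_cfc, Real.mul_self_sqrt (Real.sqrt_nonneg _)]⟩

open scoped MatrixOrder in
lemma cfc_sqrt_mul_self_conjTranspose_mul_self (A : Matrix m m 𝕜) :
    cfc Real.sqrt (Aᴴ * A) * cfc Real.sqrt (Aᴴ * A) = Aᴴ * A := by
  have hA := posSemidef_conjTranspose_mul_self A
  have hspec := spectrum_nonneg_of_nonneg (𝕜 := ℝ) hA.nonneg
  rw [cfc_mul_cfc]
  conv_rhs => rw [← cfc_id' ℝ (Aᴴ * A) hA.isHermitian]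
  exact cfc_congr fun x hx => Real.mul_self_sqrt (hspec hx)

lemma isHermitian_cfc (f : ℝ → ℝ) (A : Matrix m m 𝕜) : (cfc f A).IsHermitian :=
  (cfc_predicate f A : IsSelfAdjoint (cfc f A))

lemma IsHermitian.mul_cfc {A : Matrix m m 𝕜} (hA : A.IsHermitian) (f : ℝ → ℝ) :
    A * cfc f A = cfc (fun x => x * f x) A := by
  simpa only [cfc_id' ℝ A hA.isSelfAdjoint] using cfc_mul_cfc A (fun x => x) f

-- `(√x)⁻¹ * √x` is the indicator of `0 < x` (`√x = 0` for `x ≤ 0`, and `0⁻¹ = 0`), so its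
-- functional calculus is the orthogonal projection onto the range of a positive `A`.
lemma isIdempotentElem_cfc_inv_sqrt_mul_sqrt (A : Matrix m m 𝕜) :
    IsIdempotentElem (cfc (fun x => (√x)⁻¹ * √x) A) := by
  rw [IsIdempotentElem, cfc_mul_cfc]
  congr 1 with x
  rcases eq_or_ne (√x) 0 with h | h <;> simp [h]

open scoped MatrixOrder in
lemma PosSemidef.mul_cfc_inv_sqrt_mul_sqrt {A : Matrix m m 𝕜} (hA : A.PosSemidef) :
    A * cfc (fun x => (√x)⁻¹ * √x) A = A := by
  have hspec := spectrum_nonneg_of_nonneg (𝕜 := ℝ) hA.nonneg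
  rw [hA.isHermitian.mul_cfc]
  conv_rhs => rw [← cfc_id' ℝ A hA.isHermitian.isSelfAdjoint]
  refine cfc_congr fun x hx => ?_
  rcases (hspec hx).eq_or_lt with h | h
  · simp [← h]
  · simp [(Real.sqrt_pos.mpr h).ne']

lemma mul_cfc_inv_sqrt_mul_sqrt_conjTranspose_mul_self (A : Matrix m m 𝕜) :
    A * cfc (fun x => (√x)⁻¹ * √x) (Aᴴ * A) = A := by
  set E := cfc (fun x => (√x)⁻¹ * √x) (Aᴴ * A)
  have hAE : (A - A * E)ᴴ * (A - A * E) = (1 - E) * (Aᴴ * A - Aᴴ * A * E) := by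
    rw [conjTranspose_sub, conjTranspose_mul, (isHermitian_cfc _ _).eq]
    noncomm_ring
  rwa [(posSemidef_conjTranspose_mul_self A).mul_cfc_inv_sqrt_mul_sqrt, sub_self, mul_zero,
    conjTranspose_mul_self_eq_zero, sub_eq_zero, eq_comm] at hAE

lemma exists_mul_cfc_sqrt_eq (A : Matrix m m 𝕜) :
    ∃ U : Matrix m m 𝕜, U * cfc Real.sqrt (Aᴴ * A) = A ∧ IsIdempotentElem (Uᴴ * U) := by
  refine ⟨A * cfc (fun x => (√x)⁻¹) (Aᴴ * A), ?_, ?_⟩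
  · rw [mul_assoc, cfc_mul_cfc, mul_cfc_inv_sqrt_mul_sqrt_conjTranspose_mul_self]
  · convert isIdempotentElem_cfc_inv_sqrt_mul_sqrt (Aᴴ * A) using 1
    rw [conjTranspose_mul, (isHermitian_cfc _ _).eq, mul_assoc, ← mul_assoc Aᴴ,
      (posSemidef_conjTranspose_mul_self A).isHermitian.mul_cfc, cfc_mul_cfc]
    congr 1 with x
    rcases eq_or_ne (√x) 0 with h | h
    · simp [h]
    · rw [inv_mul_cancel₀ h]
      field_simp
      exact (Real.sq_sqrt (Real.sqrt_ne_zero'.mp h).le).symm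

end Matrix

section MatAbs

variable {n : ℕ}

lemma matAbs_eq_cfc (X : Matrix (Fin n) (Fin n) ℂ) : matAbs X = cfc Real.sqrt (Xᴴ * X) := by
  rw [(posSemidef_conjTranspose_mul_self X).isHermitian.cfc_eq, IsHermitian.cfc,
    Unitary.conjStarAlgAut_apply]
  rfl

lemma isHermitian_matAbs (X : Matrix (Fin n) (Fin n) ℂ) : (matAbs X).IsHermitian :=
  matAbs_eq_cfc X ▸ isHermitian_cfc _ _

lemma matAbs_mul_self (X : Matrix (Fin n) (Fin n) ℂ) : matAbs X * matAbs X = Xᴴ * X :=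
  matAbs_eq_cfc X ▸ cfc_sqrt_mul_self_conjTranspose_mul_self X

lemma hsNorm_matAbs (X : Matrix (Fin n) (Fin n) ℂ) : hsNorm (matAbs X) = hsNorm X := by
  rw [hsNorm, hsNorm, (isHermitian_matAbs X).eq, matAbs_mul_self]

lemma exists_mul_matAbs_eq (X : Matrix (Fin n) (Fin n) ℂ) :
    ∃ U : Matrix (Fin n) (Fin n) ℂ, U * matAbs X = X ∧ IsIdempotentElem (Uᴴ * U) :=
  matAbs_eq_cfc X ▸ exists_mul_cfc_sqrt_eq X

lemma exists_isHermitian_mul_self_eq_matAbs (X : Matrix (Fin n) (Fin n) ℂ) :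
    ∃ R : Matrix (Fin n) (Fin n) ℂ, R.IsHermitian ∧ R * R = matAbs X :=
  matAbs_eq_cfc X ▸ exists_isHermitian_mul_self_eq_cfc_sqrt _

end MatAbs

open scoped InnerProductSpace

section HilbertSchmidt

variable {n : ℕ}

lemma trace_conjTranspose_mul_eq_inner (A B : Matrix (Fin n) (Fin n) ℂ) :
    (Aᴴ * B).trace = ⟪WithLp.toLp 2 A.vec, WithLp.toLp 2 B.vec⟫_ℂ := by
  rw [EuclideanSpace.inner_toLp_toLp, dotProduct_comm, star_vec_dotProduct_vec]

lemma re_trace_conjTranspose_mul_self_eq_norm_sq (A : Matrix (Fin n) (Fin n) ℂ) :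
    (Aᴴ * A).trace.re = ‖WithLp.toLp 2 A.vec‖ ^ 2 := by
  rw [trace_conjTranspose_mul_eq_inner]
  exact inner_self_eq_norm_sq (𝕜 := ℂ) _

lemma hsNorm_eq_norm (A : Matrix (Fin n) (Fin n) ℂ) : hsNorm A = ‖WithLp.toLp 2 A.vec‖ := by
  rw [hsNorm, re_trace_conjTranspose_mul_self_eq_norm_sq, Real.sqrt_sq (norm_nonneg _)]

lemma hsNorm_nonneg (A : Matrix (Fin n) (Fin n) ℂ) : 0 ≤ hsNorm A :=
  Real.sqrt_nonneg _

lemma sq_hsNorm (A : Matrix (Fin n) (Fin n) ℂ) : hsNorm A ^ 2 = (Aᴴ * A).trace.re := by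
  rw [hsNorm_eq_norm, re_trace_conjTranspose_mul_self_eq_norm_sq]

lemma hsNorm_conjTranspose (A : Matrix (Fin n) (Fin n) ℂ) : hsNorm Aᴴ = hsNorm A := by
  rw [hsNorm, hsNorm, conjTranspose_conjTranspose, trace_mul_comm]

lemma re_trace_conjTranspose_mul_le (A B : Matrix (Fin n) (Fin n) ℂ) :
    (Aᴴ * B).trace.re ≤ hsNorm A * hsNorm B := by
  rw [trace_conjTranspose_mul_eq_inner, hsNorm_eq_norm, hsNorm_eq_norm]
  exact re_inner_le_norm (𝕜 := ℂ) _ _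

lemma re_trace_mul_le (A B : Matrix (Fin n) (Fin n) ℂ) :
    (A * B).trace.re ≤ hsNorm A * hsNorm B := by
  simpa only [conjTranspose_conjTranspose, hsNorm_conjTranspose] using
    re_trace_conjTranspose_mul_le Aᴴ B

lemma sq_hsNorm_add (A B : Matrix (Fin n) (Fin n) ℂ) :
    hsNorm (A + B) ^ 2 = hsNorm A ^ 2 + hsNorm B ^ 2 + 2 * (Bᴴ * A).trace.re := by
  have hBA : (Bᴴ * A).trace.re = (Aᴴ * B).trace.re := by
    rw [← Complex.conj_re, ← Complex.star_def, ← trace_conjTranspose, conjTranspose_mul,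
      conjTranspose_conjTranspose]
  rw [hBA, hsNorm_eq_norm, hsNorm_eq_norm, hsNorm_eq_norm, trace_conjTranspose_mul_eq_inner,
    vec_add, WithLp.toLp_add, norm_add_sq (𝕜 := ℂ), RCLike.re_to_complex]
  ring

lemma hsNorm_mul_le_of_isIdempotentElem (B E : Matrix (Fin n) (Fin n) ℂ) (hE : Eᴴ = E)
    (hEE : IsIdempotentElem E) : hsNorm (B * E) ≤ hsNorm B := by
  have h : hsNorm (B * E) ^ 2 = (Bᴴ * (B * E)).trace.re := by
    rw [sq_hsNorm, conjTranspose_mul, hE, mul_assoc, trace_mul_comm]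
    simp only [mul_assoc, hEE.eq]
  nlinarith [re_trace_conjTranspose_mul_le B (B * E), hsNorm_nonneg B, hsNorm_nonneg (B * E)]

lemma hsNorm_mul_conjTranspose_eq (B U : Matrix (Fin n) (Fin n) ℂ)
    (hU : IsIdempotentElem (Uᴴ * U)) : hsNorm (B * Uᴴ) = hsNorm (B * (Uᴴ * U)) := by
  rw [hsNorm, hsNorm, conjTranspose_mul, conjTranspose_mul, conjTranspose_mul,
    conjTranspose_conjTranspose, trace_mul_comm, trace_mul_comm (Uᴴ * U * Bᴴ)]
  simp only [mul_assoc]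
  rw [← mul_assoc Uᴴ U (Uᴴ * (U * Bᴴ)), ← mul_assoc Uᴴ U Bᴴ, ← mul_assoc (Uᴴ * U), hU.eq]

lemma hsNorm_mul_conjTranspose_le (B U : Matrix (Fin n) (Fin n) ℂ)
    (hU : IsIdempotentElem (Uᴴ * U)) : hsNorm (B * Uᴴ) ≤ hsNorm B := by
  rw [hsNorm_mul_conjTranspose_eq B U hU]
  exact hsNorm_mul_le_of_isIdempotentElem B _
    (by rw [conjTranspose_mul, conjTranspose_conjTranspose]) hU

lemma re_trace_conjTranspose_mul_le_of_polar {X Y U V R S : Matrix (Fin n) (Fin n) ℂ}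
    (hR : R.IsHermitian) (hS : S.IsHermitian) (hU : IsIdempotentElem (Uᴴ * U))
    (hV : IsIdempotentElem (Vᴴ * V)) (hX : U * (R * R) = X) (hY : V * (S * S) = Y) :
    (Yᴴ * X).trace.re ≤ √(hsNorm X * hsNorm Y) * hsNorm (R * S) := by
  subst hX hY
  set T := S * Vᴴ * U * R
  have htrace : ((V * (S * S))ᴴ * (U * (R * R))).trace = (T * (R * S)).trace := by
    rw [conjTranspose_mul, conjTranspose_mul, hS.eq]
    simp only [T, mul_assoc]
    rw [trace_mul_comm S]
    simp only [mul_assoc]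
  have hT : hsNorm T ^ 2 ≤ hsNorm (U * (R * R)) * hsNorm (V * (S * S)) := by
    calc hsNorm T ^ 2 = (U * (R * R) * Uᴴ * (V * (S * S) * Vᴴ)).trace.re := by
          rw [sq_hsNorm]
          simp only [T, conjTranspose_mul, conjTranspose_conjTranspose, hR.eq, hS.eq, mul_assoc]
          conv_rhs => rw [trace_mul_comm U]; simp only [mul_assoc]; rw [trace_mul_comm R]
          simp only [mul_assoc]
      _ ≤ hsNorm (U * (R * R) * Uᴴ) * hsNorm (V * (S * S) * Vᴴ) := re_trace_mul_le _ _
      _ ≤ hsNorm (U * (R * R)) * hsNorm (V * (S * S)) :=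
          mul_le_mul (hsNorm_mul_conjTranspose_le _ _ hU) (hsNorm_mul_conjTranspose_le _ _ hV)
            (hsNorm_nonneg _) (hsNorm_nonneg _)
  calc ((V * (S * S))ᴴ * (U * (R * R))).trace.re = (T * (R * S)).trace.re := by rw [htrace]
    _ ≤ hsNorm T * hsNorm (R * S) := re_trace_mul_le _ _
    _ ≤ _ := mul_le_mul_of_nonneg_right (Real.le_sqrt_of_sq_le hT) (hsNorm_nonneg _)

lemma sq_hsNorm_mul_of_isHermitian {R S : Matrix (Fin n) (Fin n) ℂ} (hR : R.IsHermitian)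
    (hS : S.IsHermitian) : hsNorm (R * S) ^ 2 = (R * R * (S * S)).trace.re := by
  rw [sq_hsNorm, conjTranspose_mul, hR.eq, hS.eq, mul_assoc, trace_mul_comm S]
  simp only [mul_assoc]

end HilbertSchmidt

lemma sq_add_sq_add_two_mul_le {x y σ t : ℝ} (hσ : 0 ≤ σ) (ht : t ≤ √(x * y) * σ) :
    x ^ 2 + y ^ 2 + 2 * t ≤ (√2 + 1) / 2 * (x ^ 2 + y ^ 2 + 2 * σ ^ 2) := by
  set q := √((x ^ 2 + y ^ 2) / 2)
  have hq : q ^ 2 = (x ^ 2 + y ^ 2) / 2 := Real.sq_sqrt (by positivity)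
  have hxyq : √(x * y) ≤ q := Real.sqrt_le_sqrt (by nlinarith [sq_nonneg (x - y)])
  have hw : √2 ^ 2 = 2 := Real.sq_sqrt zero_le_two
  have hw1 : 1 ≤ √2 := Real.one_le_sqrt.mpr one_le_two
  -- AM-GM with weights `√2 - 1` and `√2 + 1`, whose product is 1
  have hamgm : 2 * (q * σ) ≤ (√2 - 1) * q ^ 2 + (√2 + 1) * σ ^ 2 := by
    nlinarith [mul_nonneg (sub_nonneg.mpr hw1) (sq_nonneg (q - (√2 + 1) * σ))]
  nlinarith [mul_le_mul_of_nonneg_right hxyq hσ]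

theorem stmt_19 {n : ℕ} (X Y : Matrix (Fin n) (Fin n) ℂ) :
    hsNorm (X + Y) ≤ Real.sqrt ((Real.sqrt 2 + 1) / 2) * hsNorm (matAbs X + matAbs Y) := by
  obtain ⟨U, hUX, hU⟩ := exists_mul_matAbs_eq X
  obtain ⟨V, hVY, hV⟩ := exists_mul_matAbs_eq Y
  obtain ⟨R, hR, hRR⟩ := exists_isHermitian_mul_self_eq_matAbs X
  obtain ⟨S, hS, hSS⟩ := exists_isHermitian_mul_self_eq_matAbs Y
  have hkey := re_trace_conjTranspose_mul_le_of_polar hR hS hU hV (by rw [hRR, hUX])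
    (by rw [hSS, hVY])
  have hcross : ((matAbs Y)ᴴ * matAbs X).trace.re = hsNorm (R * S) ^ 2 := by
    rw [(isHermitian_matAbs Y).eq, trace_mul_comm, sq_hsNorm_mul_of_isHermitian hR hS, hRR, hSS]
  have hsq : hsNorm (X + Y) ^ 2 ≤ (√2 + 1) / 2 * hsNorm (matAbs X + matAbs Y) ^ 2 := by
    rw [sq_hsNorm_add, sq_hsNorm_add, hcross, hsNorm_matAbs, hsNorm_matAbs]
    exact sq_add_sq_add_two_mul_le (hsNorm_nonneg _) hkey
  calc hsNorm (X + Y) ≤ √((√2 + 1) / 2 * hsNorm (matAbs X + matAbs Y) ^ 2) :=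
        Real.le_sqrt_of_sq_le hsq
    _ = _ := by rw [Real.sqrt_mul (by positivity), Real.sqrt_sq (hsNorm_nonneg _)]
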